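/- Let f be a binary operation on ZMod (2^32) and suppose there is an odd-preserving function p : ZMod (2^32) → ZMod (2^32) belonging to the unary clone generated by multiplication and three-input addition, together with an odd element x₁ of ZMod (2^32), such that f (p x₁) (p x₁) is even. Then there exists a constant function in the unary clone generated by multiplication, three-input addition, and f. -/

import Mathlib

/-- The clone of operations of arity `n` on `ZMod (2^32)` generated by
multiplication and three-input addition. -/
inductive MulAdd3Clone (n : ℕ) : ((Fin n → ZMod (2^32)) → ZMod (2^32)) → Prop
  | proj (i : Fin n) : MulAdd3Clone n fun x => x i
  | mul {F G} : MulAdd3Clone n F → MulAdd3Clone n G →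
      MulAdd3Clone n fun x => F x * G x
  | add3 {F G H} : MulAdd3Clone n F → MulAdd3Clone n G → MulAdd3Clone n H →
      MulAdd3Clone n fun x => F x + G x + H x

/-- The clone of operations of arity `n` on `ZMod (2^32)` generated by
multiplication, three-input addition, and a binary operation `f`. -/
inductive CloneF (f : ZMod (2^32) → ZMod (2^32) → ZMod (2^32)) (n : ℕ) :
    ((Fin n → ZMod (2^32)) → ZMod (2^32)) → Prop
  | proj (i : Fin n) : CloneF f n fun x => x i
  | mul {F G} : CloneF f n F → CloneF f n G → CloneF f n fun x => F x * G x
  | add3 {F G H} : CloneF f n F → CloneF f n G → CloneF f n H →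
      CloneF f n fun x => F x + G x + H x
  | app {F G} : CloneF f n F → CloneF f n G → CloneF f n fun x => f (F x) (G x)

/-!
Write `N = 2^32`. In `ZMod N` the map `y ↦ y^N` sends odd elements to `1` (the unit group has
order `2^31`) and even elements to `0`. Feeding `x₁ * x^N` into `p` therefore gives `p x₁` at every
odd `x`, so `x^N * f (p (x₁ * x^N)) (p (x₁ * x^N))^N` is `0` at even `x` because of the first
factor and `0` at odd `x` because `f (p x₁) (p x₁)` is even. Multiplication by the odd constant
`x₁` is iterated three-input addition, so this function lies in the clone.
-/

namespace ZMod

theorem pow_two_pow_eq_zero_of_even {n : ℕ} {y : ZMod (2 ^ n)} (h : Even y.val) :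
    y ^ 2 ^ n = 0 := by
  obtain ⟨k, hk⟩ := even_iff_two_dvd.mp h
  have hy : y = 2 * k := by rw [← natCast_zmod_val y, hk, Nat.cast_mul, Nat.cast_two]
  have h2 : (2 : ZMod (2 ^ n)) ^ n = 0 := by exact_mod_cast natCast_self (2 ^ n)
  rw [hy, mul_pow, pow_eq_zero_of_le Nat.lt_two_pow_self.le h2, zero_mul]

theorem pow_two_pow_eq_one_of_odd {n : ℕ} {y : ZMod (2 ^ n)} (h : Odd y.val) :
    y ^ 2 ^ n = 1 := by
  have hcop : y.val.Coprime (2 ^ n) := (Nat.coprime_two_right.mpr h).pow_right n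
  set u := unitOfCoprime y.val hcop
  have htot : (2 ^ n).totient ∣ 2 ^ n := by
    rcases n with _ | n
    · simp
    · rw [Nat.totient_prime_pow Nat.prime_two n.succ_pos]
      simpa using Nat.pow_dvd_pow 2 n.le_succ
  have hu1 : u ^ 2 ^ n = 1 :=
    orderOf_dvd_iff_pow_eq_one.mp ((orderOf_dvd_of_pow_eq_one (pow_totient u)).trans htot)
  rw [← natCast_zmod_val y, ← coe_unitOfCoprime y.val hcop, ← Units.val_pow_eq_pow_val, hu1,
    Units.val_one]

end ZMod

namespace CloneF

variable {f : ZMod (2 ^ 32) → ZMod (2 ^ 32) → ZMod (2 ^ 32)} {n : ℕ}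
  {F : (Fin n → ZMod (2 ^ 32)) → ZMod (2 ^ 32)}

theorem pow (hF : CloneF f n F) {k : ℕ} (hk : 0 < k) : CloneF f n fun x => F x ^ k := by
  induction k, hk using Nat.le_induction with
  | base => simpa using hF
  | succ k _ ih => simpa only [pow_succ] using ih.mul hF

theorem natCast_mul_of_odd (hF : CloneF f n F) {c : ℕ} (hc : Odd c) :
    CloneF f n fun x => (c : ZMod (2 ^ 32)) * F x := by
  obtain ⟨m, rfl⟩ := hc
  induction m with
  | zero => simpa using hF
  | succ m ih =>
    convert ih.add3 hF hF using 2
    push_cast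
    ring

end CloneF

theorem MulAdd3Clone.comp_cloneF {f : ZMod (2 ^ 32) → ZMod (2 ^ 32) → ZMod (2 ^ 32)} {m n : ℕ}
    {P : (Fin m → ZMod (2 ^ 32)) → ZMod (2 ^ 32)} (hP : MulAdd3Clone m P)
    {S : Fin m → (Fin n → ZMod (2 ^ 32)) → ZMod (2 ^ 32)} (hS : ∀ i, CloneF f n (S i)) :
    CloneF f n fun x => P fun i => S i x := by
  induction hP with
  | proj i => exact hS i
  | mul _ _ ihF ihG => exact ihF.mul ihG
  | add3 _ _ _ ihF ihG ihH => exact ihF.add3 ihG ihH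

theorem stmt15_general (f : ZMod (2^32) → ZMod (2^32) → ZMod (2^32))
    (P : (Fin 1 → ZMod (2^32)) → ZMod (2^32)) (hP : MulAdd3Clone 1 P)
    (x₁ : ZMod (2^32)) (hx₁ : Odd x₁.val)
    (heven : ¬ Odd (f (P (fun _ => x₁)) (P (fun _ => x₁))).val) :
    ∃ F : (Fin 1 → ZMod (2^32)) → ZMod (2^32),
      CloneF f 1 F ∧ ∃ c : ZMod (2^32), ∀ x, F x = c := by
  have hN : 0 < 2 ^ 32 := Nat.two_pow_pos 32
  have hpow : CloneF f 1 fun x => x 0 ^ 2 ^ 32 := (CloneF.proj 0).pow hN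
  have hT : CloneF f 1 fun x => P fun _ => (x₁.val : ZMod (2 ^ 32)) * x 0 ^ 2 ^ 32 :=
    hP.comp_cloneF fun _ => hpow.natCast_mul_of_odd hx₁
  refine ⟨_, hpow.mul ((hT.app hT).pow hN), 0, fun x => ?_⟩
  rcases Nat.even_or_odd (x 0).val with h | h
  · rw [ZMod.pow_two_pow_eq_zero_of_even h, zero_mul]
  · rw [ZMod.pow_two_pow_eq_one_of_odd h, one_mul, mul_one, ZMod.natCast_zmod_val,
      ZMod.pow_two_pow_eq_zero_of_even (Nat.not_odd_iff_even.mp heven)]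

/-- If some odd-preserving unary function `p` in the clone generated by
multiplication and three-input addition (identified with an arity-1 clone
member `P` via `p x = P (fun _ => x)`) and some odd `x₁` satisfy that
`f (p x₁) (p x₁)` is even, then a constant function exists in the unary clone
generated by multiplication, three-input addition and `f`. -/
theorem stmt15 (f : ZMod (2^32) → ZMod (2^32) → ZMod (2^32))
    (P : (Fin 1 → ZMod (2^32)) → ZMod (2^32)) (hP : MulAdd3Clone 1 P)
    (hodd : ∀ x : ZMod (2^32), Odd x.val → Odd (P (fun _ => x)).val)
    (x₁ : ZMod (2^32)) (hx₁ : Odd x₁.val)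
    (heven : ¬ Odd (f (P (fun _ => x₁)) (P (fun _ => x₁))).val) :
    ∃ F : (Fin 1 → ZMod (2^32)) → ZMod (2^32),
      CloneF f 1 F ∧ ∃ c : ZMod (2^32), ∀ x, F x = c :=
  stmt15_general f P hP x₁ hx₁ heven
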